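/- One has pp(2) = 3 · pp(1), and for every natural number n ≠ 1 the strict inequality pp(n+1) < 3 · pp(n) holds. -/
import Mathlib


/-- `σ₂(n) = ∑_{d ∣ n} d²`, the sum of the squares of the divisors of `n`. -/
def sigma2 (n : ℕ) : ℕ := ∑ d ∈ n.divisors, d ^ 2

/-- The plane partition function, defined by `pp 0 = 1` and the MacMahon recurrence
`n · pp n = ∑_{k=1}^{n} σ₂(k) · pp (n−k)`. Its values are the natural numbers
`1, 1, 3, 6, 13, 24, 48, …`. -/
def pp : ℕ → ℚ
  | 0 => 1
  | n + 1 => (∑ k ∈ Finset.range (n + 1), (sigma2 (k + 1) : ℚ) * pp (n - k)) / (n + 1)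

lemma sigma2_ge (m : ℕ) (hm : 1 ≤ m) : m ^ 2 ≤ sigma2 m := by
  have h : m ∈ m.divisors := Nat.mem_divisors_self m (by omega)
  exact Finset.single_le_sum (f := fun d => d ^ 2) (fun d _ => Nat.zero_le _) h

lemma sigma2_ge_one (m : ℕ) (hm : 1 ≤ m) : 1 ≤ sigma2 m :=
  le_trans (by nlinarith) (sigma2_ge m hm)

lemma inv_sq_sum : ∀ m : ℕ, 1 ≤ m →
    ∑ d ∈ Finset.Icc 1 m, (1:ℚ)/(d:ℚ)^2 ≤ 2 - 1/m := by
  intro m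
  induction m with
  | zero => omega
  | succ n ih =>
    intro _
    rcases Nat.eq_zero_or_pos n with hn | hn
    · subst hn; norm_num
    · rw [Finset.sum_Icc_succ_top (by omega)]
      have h1 := ih hn
      have hn1 : (1:ℚ) ≤ (n:ℚ) := by exact_mod_cast hn
      have key : (1:ℚ)/((n:ℚ)+1)^2 ≤ 1/(n:ℚ) - 1/((n:ℚ)+1) := by
        rw [div_sub_div _ _ (by positivity) (by positivity)]
        rw [div_le_div_iff₀ (by positivity) (by positivity)]
        ring_nf
        nlinarith
      push_cast
      nlinarith

lemma sigma2_le (m : ℕ) (hm : 1 ≤ m) : (sigma2 m : ℚ) ≤ 2*(m:ℚ)^2 - m := by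
  have h1 : sigma2 m = ∑ d ∈ m.divisors, (m / d) ^ 2 :=
    (Nat.sum_div_divisors m (· ^ 2)).symm
  have h2 : (sigma2 m : ℚ) = ∑ d ∈ m.divisors, ((m:ℚ)/(d:ℚ))^2 := by
    rw [h1]
    push_cast
    refine Finset.sum_congr rfl (fun d hd => ?_)
    obtain ⟨hdvd, hne⟩ := Nat.mem_divisors.mp hd
    have hd0 : (d:ℚ) ≠ 0 := by
      have : 0 < d := Nat.pos_of_mem_divisors hd
      exact_mod_cast this.ne'
    rw [Nat.cast_div hdvd hd0]
  rw [h2]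
  have hsub : m.divisors ⊆ Finset.Icc 1 m := by
    intro d hd
    rw [Finset.mem_Icc]
    exact ⟨Nat.pos_of_mem_divisors hd, Nat.divisor_le hd⟩
  have h3 : ∑ d ∈ m.divisors, ((m:ℚ)/(d:ℚ))^2 ≤ ∑ d ∈ Finset.Icc 1 m, ((m:ℚ)/(d:ℚ))^2 :=
    Finset.sum_le_sum_of_subset_of_nonneg hsub (fun d _ _ => by positivity)
  have h4 : ∑ d ∈ Finset.Icc 1 m, ((m:ℚ)/(d:ℚ))^2
      = (m:ℚ)^2 * ∑ d ∈ Finset.Icc 1 m, (1:ℚ)/(d:ℚ)^2 := by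
    rw [Finset.mul_sum]
    refine Finset.sum_congr rfl (fun d hd => ?_)
    rw [div_pow]; ring
  have h5 := inv_sq_sum m hm
  have hm0 : (1:ℚ) ≤ (m:ℚ) := by exact_mod_cast hm
  calc ∑ d ∈ m.divisors, ((m:ℚ)/(d:ℚ))^2 ≤ (m:ℚ)^2 * ∑ d ∈ Finset.Icc 1 m, (1:ℚ)/(d:ℚ)^2 := by
        rw [← h4]; exact h3
    _ ≤ (m:ℚ)^2 * (2 - 1/m) := by
        apply mul_le_mul_of_nonneg_left h5 (by positivity)
    _ = 2*(m:ℚ)^2 - m := by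
        field_simp
 
lemma pp_rec (n : ℕ) : ((n:ℚ)+1) * pp (n+1)
    = ∑ k ∈ Finset.range (n+1), (sigma2 (k+1) : ℚ) * pp (n-k) := by
  rw [pp]
  rw [mul_div_cancel₀]
  positivity

lemma pp_ge_one : ∀ n, 1 ≤ pp n := by
  intro n
  induction n using Nat.strong_induction_on with
  | _ n ih =>
    match n with
    | 0 => norm_num [pp]
    | Nat.succ n =>
      rw [pp, le_div_iff₀ (by positivity)]
      have : ∑ k ∈ Finset.range (n+1), (1:ℚ)
          ≤ ∑ k ∈ Finset.range (n+1), (sigma2 (k+1) : ℚ) * pp (n-k) := by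
        refine Finset.sum_le_sum (fun k hk => ?_)
        have h1 : (1:ℚ) ≤ (sigma2 (k+1) : ℚ) := by
          exact_mod_cast sigma2_ge_one (k+1) (by omega)
        have h2 : 1 ≤ pp (n-k) := ih (n-k) (by omega)
        nlinarith
      simpa using this

lemma sq_sum (m : ℕ) :
    ∑ k ∈ Finset.range m, ((k:ℚ)+1)^2 = (m:ℚ)*((m:ℚ)+1)*(2*(m:ℚ)+1)/6 := by
  induction m with
  | zero => simp
  | succ n ih =>
    rw [Finset.sum_range_succ, ih]
    push_cast
    field_simp
    ring

lemma pp_quad (n : ℕ) (hn : 1 ≤ n) : ((n:ℚ)+1)*(2*(n:ℚ)+1)/6 ≤ pp n := by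
  obtain ⟨m, rfl⟩ : ∃ m, n = m+1 := ⟨n-1, by omega⟩
  rw [pp, le_div_iff₀ (by positivity)]
  have hstep : ∑ k ∈ Finset.range (m+1), ((k:ℚ)+1)^2
      ≤ ∑ k ∈ Finset.range (m+1), (sigma2 (k+1) : ℚ) * pp (m-k) := by
    refine Finset.sum_le_sum (fun k hk => ?_)
    have h1 : ((k:ℚ)+1)^2 ≤ (sigma2 (k+1) : ℚ) := by
      exact_mod_cast sigma2_ge (k+1) (by omega)
    have h2 : 1 ≤ pp (m-k) := pp_ge_one (m-k)
    nlinarith [sq_nonneg ((k:ℚ)+1)]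
  rw [sq_sum] at hstep
  push_cast at hstep ⊢
  nlinarith [hstep]

lemma pp_one : pp 1 = 1 := by
  have h : sigma2 1 = 1 := by decide
  rw [pp]
  simp [h, pp]

lemma pp_two : pp 2 = 3 := by
  have h1 : sigma2 1 = 1 := by decide
  have h2 : sigma2 2 = 5 := by decide
  show pp (1+1) = 3
  rw [pp, Finset.sum_range_succ, Finset.sum_range_succ]
  simp [h1, h2, pp_one, pp]
  norm_num

lemma pp_key : ∀ n : ℕ, pp (n+1) ≤ 3 * pp n ∧ (n ≠ 1 → pp (n+1) < 3 * pp n) := by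
  intro n
  induction n using Nat.strong_induction_on with
  | _ n ih =>
    match n with
    | 0 => 
      rw [pp_one]
      norm_num [pp]
    | 1 =>
      rw [pp_two, pp_one]
      norm_num
    | (m+2) =>
      have hrec1 := pp_rec (m+2)
      have hrec0 := pp_rec (m+1)
      rw [Finset.sum_range_succ, Finset.sum_range_succ] at hrec1
      rw [Finset.sum_range_succ] at hrec0
      have e1 : m+2-(m+1) = 1 := by omega
      have e2 : m+2-(m+2) = 0 := by omega
      have e3 : m+1-(m+1) = 0 := by omega
      rw [e1, e2] at hrec1
      rw [e3] at hrec0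
      rw [pp_one] at hrec1
      have hpp0 : pp 0 = 1 := by norm_num [pp]
      rw [hpp0] at hrec1 hrec0
      -- sum bound
      have hsum : ∑ k ∈ Finset.range (m+1), (sigma2 (k+1) : ℚ) * pp (m+2-k)
          ≤ 3 * ∑ k ∈ Finset.range (m+1), (sigma2 (k+1) : ℚ) * pp (m+1-k) := by
        rw [Finset.mul_sum]
        refine Finset.sum_le_sum (fun k hk => ?_)
        have hk' : k < m+1 := Finset.mem_range.mp hk
        have h2 : m+2-k = (m+1-k)+1 := by omega
        have hIH := (ih (m+1-k) (by omega)).1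
        have hs : (0:ℚ) ≤ (sigma2 (k+1) : ℚ) := by positivity
        rw [h2]
        nlinarith
      -- numeric inequality: σ₂(m+3) < 3 pp(m+2) + 2 σ₂(m+2)
      have hup : (sigma2 (m+3) : ℚ) ≤ 2*((m:ℚ)+3)^2 - ((m:ℚ)+3) := by
        have := sigma2_le (m+3) (by omega)
        push_cast at this ⊢
        linarith
      have hlo : ((m:ℚ)+2)^2 ≤ (sigma2 (m+2) : ℚ) := by
        have := sigma2_ge (m+2) (by omega)
        push_cast at this ⊢
        exact_mod_cast this
      have hq : (((m:ℕ)+2:ℕ):ℚ) = (m:ℚ)+2 := by push_cast; ring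
      have hppq : ((m:ℚ)+3)*(2*((m:ℚ)+2)+1)/6 ≤ pp (m+2) := by
        have := pp_quad (m+2) (by omega)
        push_cast at this
        linarith
      have hkey : (sigma2 (m+3) : ℚ) < 3 * pp (m+2) + 2 * (sigma2 (m+2) : ℚ) := by
        nlinarith
      push_cast at hrec1 hrec0
      have hmain : ((m:ℚ)+3) * pp (m+3) < 3 * (((m:ℚ)+3) * pp (m+2)) := by
        nlinarith
      have hpos : (0:ℚ) < (m:ℚ)+3 := by positivity
      have hlt : pp (m+3) < 3 * pp (m+2) := by
        have h3 : ((m:ℚ)+3) * pp (m+3) < ((m:ℚ)+3) * (3 * pp (m+2)) := by linarith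
        exact lt_of_mul_lt_mul_left (by linarith) (le_of_lt hpos)
      exact ⟨le_of_lt hlt, fun _ => hlt⟩

/-- `pp 2 = 3 * pp 1`, and for every natural number `n ≠ 1`: `pp (n+1) < 3 * pp n`. -/
theorem pp_step_bound :
    pp 2 = 3 * pp 1 ∧ ∀ n : ℕ, n ≠ 1 → pp (n + 1) < 3 * pp n := by
  refine ⟨by rw [pp_two, pp_one]; norm_num, fun n hn => (pp_key n).2 hn⟩
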